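/- arXiv:1402.3341 — 4 statements merged into one kernel-verified Lean document; each statement's English description precedes it below -/
import Mathlib

section
/- Let q be a prime power and 1 ≤ m ≤ q − 1. Then the second largest eigenvalue of the adjacency matrix of the Wenger graph W_m(q) equals √(m·q). In particular, the second largest eigenvalue is at most 2√q if and only if m ≤ 4. -/
open Finset

/-- Adjacency relation of the Wenger graph `W_m(q)`: a point `p = (p_1, …, p_{m+1})`
(0-indexed here) is adjacent to a line `l = (l_1, …, l_{m+1})` iff
`l_{i+1} + p_{i+1} = l_i * p_1` for `i = 1, …, m`. -/
def wengerAdj {F : Type*} [Field F] {m : ℕ} (p l : Fin (m + 1) → F) : Prop :=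
  ∀ i : Fin m, l i.succ + p i.succ = l i.castSucc * p 0

/-- The Wenger graph `W_m(q)` as a simple graph on `P ⊕ L`, where both `P` (points, `inl`)
and `L` (lines, `inr`) are copies of `F^{m+1}` for a finite field `F` with `q` elements. -/
def WengerGraph (F : Type*) [Field F] (m : ℕ) :
    SimpleGraph ((Fin (m + 1) → F) ⊕ (Fin (m + 1) → F)) where
  Adj x y :=
    match x, y with
    | Sum.inl p, Sum.inr l => wengerAdj p l
    | Sum.inr l, Sum.inl p => wengerAdj p l
    | _, _ => False
  symm := ⟨by rintro (p | l) (p' | l') h <;> exact h⟩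
  loopless := ⟨by rintro (p | l) h <;> exact h⟩

open scoped Classical in
/-- The (real) adjacency matrix of the Wenger graph `W_m(q)`. -/
noncomputable def wengerAdjMatrix (F : Type*) [Field F] (m : ℕ) :
    Matrix ((Fin (m + 1) → F) ⊕ (Fin (m + 1) → F)) ((Fin (m + 1) → F) ⊕ (Fin (m + 1) → F)) ℝ :=
  (WengerGraph F m).adjMatrix ℝ


/-
Write `B` for the point–line incidence matrix, so that the adjacency matrix is
`fromBlocks 0 B Bᵀ 0` and a nonzero `x` is an eigenvalue of it iff `x²` is an eigenvalue of
`B Bᵀ`. The lines through `p` are parametrised by their first coordinate `y` and the points on a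
line by their first coordinate `x`, and along a walk `p – l – p'` the coordinates
`u_k(p) = ∑_{j ≤ k} p_j p_0^{k-j}` change by `y (x^k - p_0^k)`. Hence, for a primitive additive
character `ψ` and `t ∈ F^m`, `B Bᵀ` maps `p ↦ g(p_0) ψ(∑ t_i u_{i+1}(p))` to a function of the same
form, with `g` replaced by `X ↦ q ∑_{f_t(x) = f_t(X)} g(x)` where `f_t = ∑ t_i X^{i+1}`. The level
sets of `f_t` have `q` elements (`t = 0`) or between `1` and `m`, and these functions span all
functions on points, so `B Bᵀ` is killed by `X ∏_s (X - q s)`: its eigenvalues are `0`, `q²` and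
some of the `q s` with `s ≤ m`. The value `q m` is attained for `f_t = ∏ (X - e_i) - const` with
`m` distinct `e_i`.
-/

open Matrix Polynomial

lemma AddChar.map_sum_eq_prod {ι A M : Type*} [AddCommMonoid A] [CommMonoid M] (ψ : AddChar A M)
    (s : Finset ι) (f : ι → A) : ψ (∑ i ∈ s, f i) = ∏ i ∈ s, ψ (f i) := by
  classical
  induction s using Finset.induction_on with
  | empty => simp
  | insert i s hi ih => rw [sum_insert hi, prod_insert hi, map_add_eq_mul, ih]

lemma AddChar.sum_apply_dotProduct {ι R R' : Type*} [Fintype ι] [DecidableEq ι] [CommRing R]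
    [Fintype R] [DecidableEq R] [CommRing R'] [IsDomain R'] {ψ : AddChar R R'}
    (hψ : ψ.IsPrimitive) (w : ι → R) :
    ∑ t : ι → R, ψ (t ⬝ᵥ w) = if w = 0 then (Fintype.card R : R') ^ Fintype.card ι else 0 := by
  simp only [dotProduct, AddChar.map_sum_eq_prod]
  rw [← Fintype.prod_sum fun i (x : R) => ψ (x * w i)]
  simp only [AddChar.sum_mulShift _ hψ, Nat.cast_ite, Nat.cast_zero, Fintype.prod_ite_zero,
    prod_const, card_univ, funext_iff, Pi.zero_apply]

lemma Matrix.aeval_mulVec_eq_zero_of_dvd {n K : Type*} [Fintype n] [DecidableEq n] [CommRing K]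
    {M : Matrix n n K} {w : n → K} {c : K} (hw : M *ᵥ (M *ᵥ w) = c • (M *ᵥ w)) {p : K[X]}
    (hp : (X - C c) * X ∣ p) : aeval M p *ᵥ w = 0 := by
  obtain ⟨S, rfl⟩ := hp
  rw [mul_comm, map_mul, ← mulVec_mulVec, map_mul, ← mulVec_mulVec, aeval_X, map_sub, aeval_X,
    aeval_C, Algebra.algebraMap_eq_smul_one, sub_mulVec, smul_mulVec, one_mulVec, hw, sub_self,
    mulVec_zero]

lemma Matrix.hasEigenvalue_mulVecLin_iff {n K : Type*} [Fintype n] [CommRing K]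
    {M : Matrix n n K} {μ : K} :
    Module.End.HasEigenvalue M.mulVecLin μ ↔ ∃ v ≠ 0, M *ᵥ v = μ • v :=
  ⟨fun h =>
    let ⟨v, hv⟩ := h.exists_hasEigenvector
    ⟨v, hv.2, Module.End.mem_eigenspace_iff.1 hv.1⟩,
    fun ⟨_, hv0, hv⟩ =>
      Module.End.hasEigenvalue_of_hasEigenvector ⟨Module.End.mem_eigenspace_iff.2 hv, hv0⟩⟩

lemma Matrix.hasEigenvalue_map_iff {n K L : Type*} [Fintype n] [DecidableEq n] [Field K]
    [Field L] (f : K →+* L) (M : Matrix n n K) (μ : K) :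
    Module.End.HasEigenvalue (M.map f).mulVecLin (f μ) ↔
      Module.End.HasEigenvalue M.mulVecLin μ := by
  rw [← toLin'_apply', ← toLin'_apply', Module.End.hasEigenvalue_iff_isRoot_charpoly,
    Module.End.hasEigenvalue_iff_isRoot_charpoly, charpoly_toLin', charpoly_toLin', charpoly_map,
    isRoot_map_iff f.injective]

lemma Matrix.hasEigenvalue_fromBlocks_zero_iff {l n K : Type*} [Fintype l] [Fintype n] [Field K]
    (B : Matrix l n K) (D : Matrix n l K) {x : K} (hx : x ≠ 0) :
    Module.End.HasEigenvalue (fromBlocks 0 B D 0).mulVecLin x ↔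
      Module.End.HasEigenvalue (B * D).mulVecLin (x ^ 2) := by
  simp only [hasEigenvalue_mulVecLin_iff]
  constructor
  · rintro ⟨v, hv0, hv⟩
    have hl : B *ᵥ (v ∘ Sum.inr) = x • (v ∘ Sum.inl) :=
      funext fun i => by simpa [fromBlocks_mulVec] using congrFun hv (Sum.inl i)
    have hr : D *ᵥ (v ∘ Sum.inl) = x • (v ∘ Sum.inr) :=
      funext fun i => by simpa [fromBlocks_mulVec] using congrFun hv (Sum.inr i)
    refine ⟨v ∘ Sum.inl, fun h0 => hv0 ?_, ?_⟩
    · rw [h0, mulVec_zero, eq_comm, smul_eq_zero] at hr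
      funext i
      rcases i with i | i
      · exact congrFun h0 i
      · exact congrFun (hr.resolve_left hx) i
    · rw [← mulVec_mulVec, hr, mulVec_smul, hl, smul_smul, sq]
  · rintro ⟨w, hw0, hw⟩
    refine ⟨Sum.elim (x • w) (D *ᵥ w), fun h0 => hw0 ?_, ?_⟩
    · funext i
      simpa [hx] using congrFun h0 (Sum.inl i)
    · rw [fromBlocks_mulVec]
      funext i
      rcases i with i | i
      · simp [mulVec_mulVec, hw, sq, mul_assoc]
      · simp [mulVec_smul]

namespace Wenger

section Geometry

variable {F : Type*} [Field F] {m : ℕ}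

/-- `uCoord p k = ∑_{j=1}^{k} p_j p_0^{k-j}` (coordinates past `m` read as `0`): the lines
through `p` are exactly `l_k = l_0 p_0^k - uCoord p k`. -/
def uCoord (p : Fin (m + 1) → F) : ℕ → F
  | 0 => 0
  | k + 1 => uCoord p k * p 0 + if h : k + 1 < m + 1 then p ⟨k + 1, h⟩ else 0

@[simp] lemma uCoord_zero (p : Fin (m + 1) → F) : uCoord p 0 = 0 := rfl

lemma uCoord_succ (p : Fin (m + 1) → F) (i : Fin m) :
    uCoord p (i + 1) = uCoord p i * p 0 + p i.succ := by
  simp [uCoord, Fin.succ]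

lemma wengerAdj_iff {p l : Fin (m + 1) → F} :
    wengerAdj p l ↔ ∀ k : Fin (m + 1), l k = l 0 * p 0 ^ (k : ℕ) - uCoord p k := by
  refine ⟨fun h k => ?_, fun h i => ?_⟩
  · induction k using Fin.induction with
    | zero => simp
    | succ i ih =>
      rw [Fin.val_castSucc] at ih
      rw [Fin.val_succ, uCoord_succ, pow_succ]
      linear_combination h i + p 0 * ih
  · have hsucc := h i.succ
    rw [Fin.val_succ, uCoord_succ, pow_succ] at hsucc
    rw [hsucc, h i.castSucc, Fin.val_castSucc]
    ring

def lineThrough (p : Fin (m + 1) → F) (y : F) : Fin (m + 1) → F :=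
  fun k => y * p 0 ^ (k : ℕ) - uCoord p k

@[simp] lemma lineThrough_zero (p : Fin (m + 1) → F) (y : F) : lineThrough p y 0 = y := by
  simp [lineThrough]

lemma wengerAdj_lineThrough (p : Fin (m + 1) → F) (y : F) : wengerAdj p (lineThrough p y) :=
  wengerAdj_iff.2 fun k => by rw [lineThrough_zero]; rfl

lemma eq_lineThrough {p l : Fin (m + 1) → F} (h : wengerAdj p l) : l = lineThrough p (l 0) :=
  funext (wengerAdj_iff.1 h)

lemma lineThrough_injective (p : Fin (m + 1) → F) : Function.Injective (lineThrough p) :=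
  fun y y' h => by rw [← lineThrough_zero p y, h, lineThrough_zero]

def pointOn (l : Fin (m + 1) → F) (x : F) : Fin (m + 1) → F :=
  Fin.cases x fun k => l k.castSucc * x - l k.succ

@[simp] lemma pointOn_zero (l : Fin (m + 1) → F) (x : F) : pointOn l x 0 = x := rfl

lemma wengerAdj_pointOn (l : Fin (m + 1) → F) (x : F) : wengerAdj (pointOn l x) l :=
  fun i => by simp [pointOn]

lemma eq_pointOn {p l : Fin (m + 1) → F} (h : wengerAdj p l) : p = pointOn l (p 0) := by
  funext k
  induction k using Fin.cases with
  | zero => rfl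
  | succ i => simp only [pointOn, Fin.cases_succ]; linear_combination h i

lemma pointOn_injective (l : Fin (m + 1) → F) : Function.Injective (pointOn l) :=
  fun x x' h => by rw [← pointOn_zero l x, h, pointOn_zero]

lemma uCoord_pointOn_lineThrough (p : Fin (m + 1) → F) (y x : F) (k : Fin (m + 1)) :
    uCoord (pointOn (lineThrough p y) x) k = uCoord p k + y * (x ^ (k : ℕ) - p 0 ^ (k : ℕ)) := by
  have h := wengerAdj_iff.1 (wengerAdj_pointOn (lineThrough p y) x) k
  rw [pointOn_zero, lineThrough_zero] at h
  have hl : lineThrough p y k = y * p 0 ^ (k : ℕ) - uCoord p k := rfl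
  linear_combination h - hl

lemma eq_of_uCoord_eq {p p' : Fin (m + 1) → F} (h0 : p 0 = p' 0)
    (hu : ∀ i : Fin m, uCoord p (i + 1) = uCoord p' (i + 1)) : p = p' := by
  funext k
  induction k using Fin.cases with
  | zero => exact h0
  | succ i =>
    have hprev : uCoord p i = uCoord p' i := by
      rcases i with ⟨_ | j, hj⟩
      · rfl
      · exact hu ⟨j, by omega⟩
    have := hu i
    rw [uCoord_succ, uCoord_succ, hprev, h0] at this
    linear_combination this

end Geometry

section Incidence

variable (F : Type*) [Field F] (m : ℕ) (K : Type*)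

open scoped Classical in
noncomputable def incidenceMatrix [Zero K] [One K] :
    Matrix (Fin (m + 1) → F) (Fin (m + 1) → F) K :=
  of fun p l => if wengerAdj p l then 1 else 0

variable {F m K}

lemma incidenceMatrix_map {L : Type*} [Semiring K] [Semiring L] (f : K →+* L) :
    (incidenceMatrix F m K).map f = incidenceMatrix F m L := by
  ext p l
  by_cases h : wengerAdj p l <;> simp [incidenceMatrix, h]

variable [Fintype F]

lemma incidenceMatrix_mulVec [NonAssocSemiring K] (w : (Fin (m + 1) → F) → K)
    (p : Fin (m + 1) → F) : (incidenceMatrix F m K *ᵥ w) p = ∑ y : F, w (lineThrough p y) := by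
  classical
  have hlines : univ.filter (wengerAdj p) = univ.image (lineThrough p) := by
    ext l
    simp only [mem_filter, mem_univ, true_and, mem_image]
    exact ⟨fun hl => ⟨l 0, (eq_lineThrough hl).symm⟩,
      fun ⟨y, hy⟩ => hy ▸ wengerAdj_lineThrough p y⟩
  simp only [mulVec, dotProduct, incidenceMatrix, of_apply, ite_mul, one_mul, zero_mul]
  rw [← sum_filter, hlines, sum_image fun _ _ _ _ => (lineThrough_injective p ·)]

lemma transpose_incidenceMatrix_mulVec [NonAssocSemiring K] (w : (Fin (m + 1) → F) → K)
    (l : Fin (m + 1) → F) : ((incidenceMatrix F m K)ᵀ *ᵥ w) l = ∑ x : F, w (pointOn l x) := by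
  classical
  have hpoints : univ.filter (wengerAdj · l) = univ.image (pointOn l) := by
    ext p
    simp only [mem_filter, mem_univ, true_and, mem_image]
    exact ⟨fun hp => ⟨p 0, (eq_pointOn hp).symm⟩, fun ⟨x, hx⟩ => hx ▸ wengerAdj_pointOn l x⟩
  simp only [mulVec, dotProduct, transpose_apply, incidenceMatrix, of_apply, ite_mul, one_mul,
    zero_mul]
  rw [← sum_filter, hpoints, sum_image fun _ _ _ _ => (pointOn_injective l ·)]

lemma incidenceMatrix_mul_transpose_mulVec [Semiring K] (w : (Fin (m + 1) → F) → K)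
    (p : Fin (m + 1) → F) :
    ((incidenceMatrix F m K * (incidenceMatrix F m K)ᵀ) *ᵥ w) p =
      ∑ y : F, ∑ x : F, w (pointOn (lineThrough p y) x) := by
  rw [← mulVec_mulVec, incidenceMatrix_mulVec]
  simp only [transpose_incidenceMatrix_mulVec]

end Incidence

section Fibers

variable {F : Type*} [Field F] {m : ℕ}

noncomputable def phasePoly (t : Fin m → F) : F[X] := ∑ i, C (t i) * X ^ ((i : ℕ) + 1)

lemma natDegree_phasePoly_le (t : Fin m → F) : (phasePoly t).natDegree ≤ m :=
  natDegree_sum_le_of_forall_le _ _ fun i _ =>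
    (natDegree_C_mul_X_pow_le _ _).trans (Nat.succ_le_of_lt i.isLt)

lemma coeff_phasePoly (t : Fin m → F) (i : Fin m) : (phasePoly t).coeff (i + 1) = t i := by
  simp [phasePoly, Fin.val_inj]

lemma phasePoly_sub_C_ne_zero {t : Fin m → F} (ht : t ≠ 0) (c : F) : phasePoly t - C c ≠ 0 := by
  obtain ⟨i, hi⟩ := Function.ne_iff.1 ht
  intro h
  have := congrArg (coeff · ((i : ℕ) + 1)) h
  simp only [coeff_sub, coeff_phasePoly, coeff_C_succ, sub_zero, coeff_zero] at this
  exact hi this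

variable [Fintype F] [DecidableEq F]

noncomputable def fiber (t : Fin m → F) (a : F) : Finset F :=
  univ.filter fun x => (phasePoly t).eval x = (phasePoly t).eval a

lemma mem_fiber {t : Fin m → F} {a x : F} :
    x ∈ fiber t a ↔ (phasePoly t).eval x = (phasePoly t).eval a := by
  simp [fiber]

lemma fiber_eq_of_mem {t : Fin m → F} {a x : F} (h : x ∈ fiber t a) : fiber t x = fiber t a := by
  ext y
  rw [mem_fiber, mem_fiber, mem_fiber.1 h]

lemma card_fiber_le {t : Fin m → F} (ht : t ≠ 0) (a : F) : #(fiber t a) ≤ m := by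
  refine (card_le_degree_of_subset_roots (p := phasePoly t - C ((phasePoly t).eval a))
    fun x hx => ?_).trans (natDegree_sub_C.trans_le (natDegree_phasePoly_le t))
  rw [mem_roots (phasePoly_sub_C_ne_zero ht _), IsRoot.def, eval_sub, eval_C, sub_eq_zero]
  exact mem_fiber.1 hx

lemma card_fiber_mem (t : Fin m → F) (a : F) :
    #(fiber t a) ∈ insert (Fintype.card F) (Icc 1 m) := by
  by_cases ht : t = 0
  · simp [ht, fiber, phasePoly]
  · exact mem_insert_of_mem (mem_Icc.2 ⟨card_pos.2 ⟨a, mem_fiber.2 rfl⟩, card_fiber_le ht a⟩)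

/-- For `m` distinct `e_i`, take `f_t = ∏ (X - e_i) - const`: its fiber through `e_0` is `{e_i}`. -/
lemma exists_card_fiber_eq (hm : 1 ≤ m) (hmq : m ≤ Fintype.card F) :
    ∃ (t : Fin m → F) (a : F), #(fiber t a) = m := by
  let e : Fin m ↪ F := (Fin.castLEEmb hmq).trans (Fintype.equivFin F).symm.toEmbedding
  let g : F[X] := ∏ i, (X - C (e i))
  have hg : g.natDegree = m := by simp [g, natDegree_prod _ _ fun i _ => X_sub_C_ne_zero (e i)]
  have hphase : phasePoly (fun i : Fin m => g.coeff (i + 1)) = g - C (g.coeff 0) := by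
    conv_rhs =>
      rw [as_sum_range' g (m + 1) (by omega), sum_range_succ', ← Fin.sum_univ_eq_sum_range]
    simp [phasePoly, C_mul_X_pow_eq_monomial]
  have hroot (x : F) : g.eval x = 0 ↔ x ∈ univ.map e := by
    simp only [g, eval_prod, prod_eq_zero_iff, eval_sub, eval_X, eval_C, sub_eq_zero, mem_univ,
      true_and, mem_map]
    exact exists_congr fun _ => eq_comm
  refine ⟨fun i => g.coeff (i + 1), e ⟨0, hm⟩, ?_⟩
  have hfiber : fiber (fun i : Fin m => g.coeff (i + 1)) (e ⟨0, hm⟩) = univ.map e := by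
    ext x
    rw [mem_fiber, hphase, eval_sub, eval_sub, eval_C, eval_C, sub_left_inj,
      (hroot (e ⟨0, hm⟩)).2 (mem_map_of_mem e (mem_univ _)), hroot]
  rw [hfiber, card_map, card_univ, Fintype.card_fin]

end Fibers

section Characters

variable {F : Type*} [Field F] {m : ℕ} {K : Type*} [Field K] (ψ : AddChar F K)

def phase (t : Fin m → F) (p : Fin (m + 1) → F) : F := t ⬝ᵥ fun i => uCoord p (i + 1)

noncomputable def charVec (t : Fin m → F) (g : F → K) : (Fin (m + 1) → F) → K :=
  fun p => g (p 0) * ψ (phase t p)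

variable {ψ}

lemma phase_pointOn_lineThrough (t : Fin m → F) (p : Fin (m + 1) → F) (y x : F) :
    phase t (pointOn (lineThrough p y) x) =
      phase t p + y * ((phasePoly t).eval x - (phasePoly t).eval (p 0)) := by
  have hu (i : Fin m) := uCoord_pointOn_lineThrough p y x i.succ
  simp only [Fin.val_succ] at hu
  simp only [phase, dotProduct, phasePoly, hu, eval_finsetSum, eval_mul, eval_C, eval_pow,
    eval_X, mul_sum, ← sum_sub_distrib, ← sum_add_distrib]
  exact sum_congr rfl fun i _ => by ring_nf

variable [Fintype F] [DecidableEq F]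

lemma incidenceMatrix_mul_transpose_mulVec_charVec (hψ : ψ.IsPrimitive) (t : Fin m → F)
    (g : F → K) :
    (incidenceMatrix F m K * (incidenceMatrix F m K)ᵀ) *ᵥ charVec ψ t g =
      charVec ψ t fun a => Fintype.card F * ∑ x ∈ fiber t a, g x := by
  funext p
  have hwalk (y x : F) : charVec ψ t g (pointOn (lineThrough p y) x) =
      g x * ψ (phase t p) * ψ (y * ((phasePoly t).eval x - (phasePoly t).eval (p 0))) := by
    rw [charVec, pointOn_zero, phase_pointOn_lineThrough, AddChar.map_add_eq_mul, mul_assoc]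
  simp only [incidenceMatrix_mul_transpose_mulVec, hwalk]
  rw [sum_comm]
  simp only [← mul_sum, AddChar.sum_mulShift _ hψ, sub_eq_zero]
  simp only [charVec, fiber, sum_filter, mul_sum, sum_mul]
  exact sum_congr rfl fun x _ => by split_ifs <;> ring

lemma incidenceMatrix_mul_transpose_mulVec_charVec_indicator (hψ : ψ.IsPrimitive)
    (t : Fin m → F) (a : F) :
    (incidenceMatrix F m K * (incidenceMatrix F m K)ᵀ) *ᵥ
        charVec ψ t (fun x => if x ∈ fiber t a then 1 else 0) =
      (Fintype.card F * #(fiber t a) : K) •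
        charVec ψ t (fun x => if x ∈ fiber t a then 1 else 0) := by
  rw [incidenceMatrix_mul_transpose_mulVec_charVec hψ]
  funext p
  simp only [charVec, Pi.smul_apply, smul_eq_mul, sum_boole]
  by_cases hp : p 0 ∈ fiber t a
  · rw [fiber_eq_of_mem hp, filter_true_of_mem fun _ => id, if_pos hp]
    ring
  · have hdisj : ∀ x ∈ fiber t (p 0), x ∉ fiber t a := fun x hx hxa =>
      hp (mem_fiber.2 ((mem_fiber.1 hx).symm.trans (mem_fiber.1 hxa)))
    rw [filter_false_of_mem hdisj, if_neg hp]
    simp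

lemma incidenceMatrix_mul_transpose_mulVec_charVec_single (hψ : ψ.IsPrimitive)
    (t : Fin m → F) (a : F) :
    (incidenceMatrix F m K * (incidenceMatrix F m K)ᵀ) *ᵥ charVec ψ t (Pi.single a 1) =
      (Fintype.card F : K) • charVec ψ t (fun x => if x ∈ fiber t a then 1 else 0) := by
  rw [incidenceMatrix_mul_transpose_mulVec_charVec hψ]
  funext p
  simp only [charVec, Pi.smul_apply, smul_eq_mul, sum_pi_single', mem_fiber, eq_comm]
  ring

lemma sum_charVec_single (hψ : ψ.IsPrimitive) (p₀ : Fin (m + 1) → F) :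
    ∑ t : Fin m → F, ψ (-phase t p₀) • charVec ψ t (Pi.single (p₀ 0) 1) =
      ((Fintype.card F : K) ^ m) • Pi.single p₀ 1 := by
  funext p
  simp only [Finset.sum_apply, Pi.smul_apply, smul_eq_mul, charVec]
  by_cases h0 : p 0 = p₀ 0
  · have hterm (t : Fin m → F) :
        ψ (-phase t p₀) * ((Pi.single (p₀ 0) (1 : K) : F → K) (p 0) * ψ (phase t p)) =
          ψ (t ⬝ᵥ ((fun i : Fin m => uCoord p (i + 1)) - fun i : Fin m => uCoord p₀ (i + 1))) := by
      rw [h0, Pi.single_eq_same, one_mul, ← AddChar.map_add_eq_mul, phase, phase, dotProduct_sub,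
        neg_add_eq_sub]
    simp only [hterm, AddChar.sum_apply_dotProduct hψ, Fintype.card_fin, sub_eq_zero]
    by_cases hp : p = p₀
    · simp [hp]
    · rw [if_neg fun h => hp (eq_of_uCoord_eq h0 (congrFun h)), Pi.single_eq_of_ne hp, mul_zero]
  · have hp : p ≠ p₀ := fun h => h0 (h ▸ rfl)
    simp [Pi.single_eq_of_ne h0, Pi.single_eq_of_ne hp]

end Characters

section Spectrum

variable {F : Type*} [Field F] [Fintype F] [DecidableEq F] {m : ℕ} {K : Type*} [Field K]
  {ψ : AddChar F K}

variable (K) in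
/-- `s` runs over the possible sizes of a `fiber`: `q` for `t = 0`, and `1, …, m` otherwise. -/
noncomputable def annihilatingPoly (q m : ℕ) : K[X] :=
  X * ∏ s ∈ insert q (Icc 1 m), (X - C ((q * s : ℕ) : K))

lemma dvd_annihilatingPoly {q s : ℕ} (hs : s ∈ insert q (Icc 1 m)) :
    (X - C ((q * s : ℕ) : K)) * X ∣ annihilatingPoly K q m := by
  rw [annihilatingPoly, mul_comm X]
  exact mul_dvd_mul_right (dvd_prod_of_mem (fun s => X - C ((q * s : ℕ) : K)) hs) X

lemma eval_annihilatingPoly_eq_zero_iff {q : ℕ} {μ : K} :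
    (annihilatingPoly K q m).eval μ = 0 ↔ μ = 0 ∨ ∃ s ∈ insert q (Icc 1 m), μ = (q * s : ℕ) := by
  simp [annihilatingPoly, eval_prod, prod_eq_zero_iff, sub_eq_zero]

lemma aeval_incidenceMatrix_mul_transpose_annihilatingPoly (hψ : ψ.IsPrimitive)
    (hq : (Fintype.card F : K) ≠ 0) :
    aeval (incidenceMatrix F m K * (incidenceMatrix F m K)ᵀ)
      (annihilatingPoly K (Fintype.card F) m) = 0 := by
  set M := aeval (incidenceMatrix F m K * (incidenceMatrix F m K)ᵀ)
    (annihilatingPoly K (Fintype.card F) m)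
  have hchar (t : Fin m → F) (a : F) : M *ᵥ charVec ψ t (Pi.single a 1) = 0 := by
    refine Matrix.aeval_mulVec_eq_zero_of_dvd ?_ (dvd_annihilatingPoly (card_fiber_mem t a))
    rw [incidenceMatrix_mul_transpose_mulVec_charVec_single hψ, mulVec_smul,
      incidenceMatrix_mul_transpose_mulVec_charVec_indicator hψ, smul_comm, Nat.cast_mul]
  have hsingle (p₀ : Fin (m + 1) → F) : M *ᵥ Pi.single p₀ 1 = 0 := by
    have h := congrArg (M *ᵥ ·) (sum_charVec_single hψ p₀)
    simp only [mulVec_sum, mulVec_smul, hchar, smul_zero, sum_const_zero] at h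
    exact (smul_eq_zero.1 h.symm).resolve_left (pow_ne_zero _ hq)
  ext i j
  simpa using congrFun (hsingle j) i

lemma eq_of_incidenceMatrix_mul_transpose_hasEigenvalue (hψ : ψ.IsPrimitive)
    (hq : (Fintype.card F : K) ≠ 0) {μ : K}
    (h : Module.End.HasEigenvalue (incidenceMatrix F m K * (incidenceMatrix F m K)ᵀ).mulVecLin μ) :
    μ = 0 ∨ ∃ s ∈ insert (Fintype.card F) (Icc 1 m), μ = (Fintype.card F * s : ℕ) := by
  obtain ⟨v, hv⟩ := h.exists_hasEigenvector
  have hP :=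
    Module.End.aeval_apply_of_hasEigenvector (p := annihilatingPoly K (Fintype.card F) m) hv
  have hlin : (incidenceMatrix F m K * (incidenceMatrix F m K)ᵀ).mulVecLin =
      Matrix.toLinAlgEquiv' (incidenceMatrix F m K * (incidenceMatrix F m K)ᵀ) := rfl
  rw [hlin, aeval_algHom_apply, aeval_incidenceMatrix_mul_transpose_annihilatingPoly hψ hq,
    map_zero, LinearMap.zero_apply] at hP
  exact eval_annihilatingPoly_eq_zero_iff.1 ((smul_eq_zero.1 hP.symm).resolve_right hv.2)

lemma hasEigenvalue_incidenceMatrix_mul_transpose (hψ : ψ.IsPrimitive) (hm : 1 ≤ m)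
    (hmq : m ≤ Fintype.card F) :
    Module.End.HasEigenvalue (incidenceMatrix F m K * (incidenceMatrix F m K)ᵀ).mulVecLin
      (Fintype.card F * m) := by
  obtain ⟨t, a, hfiber⟩ := exists_card_fiber_eq hm hmq
  have heigen := incidenceMatrix_mul_transpose_mulVec_charVec_indicator hψ t a
  rw [hfiber] at heigen
  refine Module.End.hasEigenvalue_of_hasEigenvector ⟨Module.End.mem_eigenspace_iff.2 heigen, ?_⟩
  intro h
  have := congrFun h fun _ => a
  simp only [charVec, mem_fiber, if_true, one_mul, Pi.zero_apply] at this
  have hunit := ψ.map_add_eq_mul (phase t fun _ => a) (-phase t fun _ => a)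
  rw [add_neg_cancel, AddChar.map_zero_eq_one, this, zero_mul] at hunit
  exact one_ne_zero hunit

end Spectrum

end Wenger

section Adjacency

open Wenger

variable {F : Type*} [Field F] {m : ℕ}

lemma wengerAdjMatrix_eq_fromBlocks :
    wengerAdjMatrix F m = fromBlocks 0 (incidenceMatrix F m ℝ) (incidenceMatrix F m ℝ)ᵀ 0 := by
  ext (p | l) (p' | l') <;>
    simp [wengerAdjMatrix, SimpleGraph.adjMatrix, WengerGraph, incidenceMatrix] <;> congr

variable [Fintype F]

lemma hasEigenvalue_wengerAdjMatrix_iff {x : ℝ} (hx : x ≠ 0) :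
    Module.End.HasEigenvalue (wengerAdjMatrix F m).mulVecLin x ↔
      Module.End.HasEigenvalue (incidenceMatrix F m ℂ * (incidenceMatrix F m ℂ)ᵀ).mulVecLin
        ((x : ℂ) ^ 2) := by
  classical
  rw [wengerAdjMatrix_eq_fromBlocks, hasEigenvalue_fromBlocks_zero_iff _ _ hx,
    ← hasEigenvalue_map_iff Complex.ofRealHom, Matrix.map_mul, transpose_map, incidenceMatrix_map,
    map_pow, Complex.ofRealHom_eq_coe]

lemma hasEigenvalue_wengerAdjMatrix_sqrt (hm : 1 ≤ m) (hmq : m ≤ Fintype.card F) :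
    Module.End.HasEigenvalue (wengerAdjMatrix F m).mulVecLin √(m * Fintype.card F) := by
  classical
  have hpos : (0 : ℝ) < m * Fintype.card F := by
    have : 0 < m := hm
    positivity
  rw [hasEigenvalue_wengerAdjMatrix_iff (Real.sqrt_pos.2 hpos).ne', ← Complex.ofReal_pow,
    Real.sq_sqrt hpos.le, mul_comm]
  exact_mod_cast hasEigenvalue_incidenceMatrix_mul_transpose
    (AddChar.FiniteField.primitiveChar_to_Complex_isPrimitive F) hm hmq

lemma le_sqrt_of_hasEigenvalue_wengerAdjMatrix {x : ℝ}
    (h : Module.End.HasEigenvalue (wengerAdjMatrix F m).mulVecLin x) (hxq : x < Fintype.card F) :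
    x ≤ √(m * Fintype.card F) := by
  classical
  rcases le_or_gt x 0 with hx | hx
  · exact hx.trans (Real.sqrt_nonneg _)
  obtain h0 | ⟨s, hs, hxs⟩ := eq_of_incidenceMatrix_mul_transpose_hasEigenvalue
    (AddChar.FiniteField.primitiveChar_to_Complex_isPrimitive F) (by simp)
    ((hasEigenvalue_wengerAdjMatrix_iff hx.ne').1 h)
  · exact absurd (by exact_mod_cast h0) (pow_ne_zero 2 hx.ne')
  have hxs : x ^ 2 = Fintype.card F * s := by exact_mod_cast hxs
  rw [Real.le_sqrt hx.le (by positivity), hxs, mul_comm]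
  rcases mem_insert.1 hs with rfl | hs
  · nlinarith
  · gcongr
    exact_mod_cast (mem_Icc.1 hs).2

end Adjacency

lemma Real.sqrt_mul_le_two_mul_sqrt_iff {a b : ℝ} (hb : 0 < b) : √(a * b) ≤ 2 * √b ↔ a ≤ 4 := by
  rw [show 2 * √b = √(4 * b) by rw [Real.sqrt_mul zero_le_four, show (4 : ℝ) = 2 ^ 2 by norm_num,
    Real.sqrt_sq zero_le_two], Real.sqrt_le_sqrt_iff (by positivity), mul_le_mul_iff_left₀ hb]

/-- For a prime power `q` and `1 ≤ m ≤ q − 1`, the second largest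
eigenvalue of the adjacency matrix of `W_m(q)` (the largest one strictly smaller than
the largest eigenvalue `q`) equals `√(m·q)`; in particular it is at most `2√q` iff
`m ≤ 4`. -/
theorem wenger_second_eigenvalue (q m : ℕ) (F : Type) [Field F] [Fintype F]
    (hq : Fintype.card F = q) (hm1 : 1 ≤ m) (hm2 : m ≤ q - 1) :
    IsGreatest {x : ℝ |
        Module.End.HasEigenvalue ((wengerAdjMatrix F m).mulVecLin) x ∧ x < q}
      (Real.sqrt (m * q)) ∧
    (Real.sqrt (m * q) ≤ 2 * Real.sqrt q ↔ m ≤ 4) := by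
  subst hq
  have hmq : m < Fintype.card F := by have := Fintype.one_lt_card (α := F); omega
  refine ⟨⟨⟨hasEigenvalue_wengerAdjMatrix_sqrt hm1 hmq.le, ?_⟩,
    fun x hx => le_sqrt_of_hasEigenvalue_wengerAdjMatrix hx.1 hx.2⟩, ?_⟩
  · rw [Real.sqrt_lt' (by simp [Fintype.card_pos]), sq]
    gcongr
  · exact (Real.sqrt_mul_le_two_mul_sqrt_iff (by simp [Fintype.card_pos])).trans Nat.cast_le
end

section
/- Let q be a prime power and let m and i be integers with 0 ≤ i ≤ m ≤ q − 1. Then the number of nonzero polynomials in F_q[X] of degree at most m (not necessarily monic) having exactly i distinct roots in F_q equals (q−1)·C(q,i)·∑_{d=i}^{m} ∑_{k=0}^{d−i} (−1)^k · C(q−i,k) · q^{d−i−k}. -/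
/-!
Dividing by the leading coefficient, which takes `q - 1` values, reduces the count to monic
polynomials of each degree `d ≤ m`. A monic `g` of degree `d` whose set of roots in `F_q` is
exactly `s`, with `#s = i`, is `(∏_{a ∈ s} (X - a)) * h` for a unique monic `h` of degree `d - i`
without roots outside `s`; there are `C(q, i)` such sets `s`. The monic polynomials of degree `e`
vanishing on a set `T` are the multiples of `∏_{t ∈ T} (X - t)`, so there are `q ^ (e - #T)` of
them (none if `#T > e`), and inclusion–exclusion over `T ⊆ sᶜ` counts the `h` as
`∑_{k ≤ d - i} (-1)^k C(q - i, k) q^(d - i - k)`.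
-/

open Finset Polynomial

namespace Finset

theorem sum_range_choose_smul_of_eq_zero {M : Type*} [AddCommMonoid M] (a n : ℕ)
    {f : ℕ → M} (hf : ∀ k, n < k → f k = 0) :
    ∑ k ∈ range (a + 1), a.choose k • f k = ∑ k ∈ range (n + 1), a.choose k • f k := by
  have hext (N : ℕ) (hN : N = a ∨ N = n) :
      ∑ k ∈ range (N + 1), a.choose k • f k = ∑ k ∈ range (a + n + 1), a.choose k • f k := by
    refine sum_subset (range_subset_range.2 (by omega)) fun k _ hk => ?_
    rw [mem_range, not_lt] at hk
    rcases hN with rfl | rfl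
    · rw [Nat.choose_eq_zero_of_lt (by omega), zero_smul]
    · rw [hf k (by omega), smul_zero]
  rw [hext a (.inl rfl), hext n (.inr rfl)]

theorem inclusion_exclusion_card_filter {α ι : Type*} [DecidableEq ι] (U : Finset α)
    (s : Finset ι) (P : ι → α → Prop) [∀ i, DecidablePred (P i)] :
    (#(U.filter fun a => ∀ i ∈ s, ¬P i a) : ℤ) =
      ∑ t ∈ s.powerset, (-1 : ℤ) ^ #t * #(U.filter fun a => ∀ i ∈ t, P i a) := by
  have hsign (a : α) : ∑ t ∈ s.powerset, (-1 : ℤ) ^ #t * (if ∀ i ∈ t, P i a then 1 else 0) =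
      if ∀ i ∈ s, ¬P i a then 1 else 0 := by
    have hpow : s.powerset.filter (fun t => ∀ i ∈ t, P i a) = (s.filter (P · a)).powerset := by
      ext t
      simp only [mem_filter, mem_powerset, subset_iff]
      grind
    simp_rw [mul_ite, mul_one, mul_zero, ← sum_filter, hpow, sum_powerset_neg_one_pow_card,
      filter_eq_empty_iff]
  simp_rw [natCast_card_filter, mul_sum]
  rw [sum_comm]
  exact sum_congr rfl fun a _ => (hsign a).symm

end Finset

namespace Polynomial

section Roots

variable {R : Type*} [CommRing R] [IsDomain R]

theorem prod_X_sub_C_dvd_iff {s : Finset R} {p : R[X]} :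
    (∏ a ∈ s, (X - C a)) ∣ p ↔ ∀ a ∈ s, p.eval a = 0 := by
  rcases eq_or_ne p 0 with rfl | hp
  · simp
  rw [Finset.prod, Multiset.prod_X_sub_C_dvd_iff_le_roots hp, Multiset.le_iff_subset s.nodup]
  simp [Multiset.subset_iff, mem_roots hp]

theorem ncard_setOf_eval_eq_zero [DecidableEq R] {p : R[X]} (hp : p ≠ 0) :
    {a | p.eval a = 0}.ncard = #p.roots.toFinset := by
  rw [← Set.ncard_coe_finset]
  congr
  ext a
  simp [mem_roots hp]

end Roots

section MonicsOfDegree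

variable (R : Type*) [Ring R] [Fintype R]

open Classical in
noncomputable def monicsOfDegree (n : ℕ) : Finset R[X] :=
  univ.image fun v : Fin n → R => X ^ n + ((degreeLTEquiv R n).symm v : R[X])

variable {R}

open scoped Classical in
theorem card_monicsOfDegree (n : ℕ) : #(monicsOfDegree R n) = Fintype.card R ^ n := by
  rw [monicsOfDegree, card_image_of_injective, card_univ, Fintype.card_fun, Fintype.card_fin]
  exact (add_right_injective _).comp
    (Subtype.val_injective.comp (degreeLTEquiv R n).symm.injective)

variable [Nontrivial R]

theorem mem_monicsOfDegree {p : R[X]} {n : ℕ} :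
    p ∈ monicsOfDegree R n ↔ IsMonicOfDegree p n := by
  simp only [monicsOfDegree, mem_image, mem_univ, true_and]
  constructor
  · rintro ⟨v, rfl⟩
    have hlt := mem_degreeLT.mp ((degreeLTEquiv R n).symm v).2
    refine ⟨?_, monic_X_pow_add hlt⟩
    rw [natDegree_add_eq_left_of_degree_lt (by rwa [degree_X_pow]), natDegree_X_pow]
  · intro hp
    have hlt : p - X ^ n ∈ degreeLT R n := by
      have hdeg : p.degree = n := (degree_eq_iff_natDegree_eq hp.ne_zero).mpr hp.natDegree_eq
      rw [mem_degreeLT, ← hdeg]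
      exact degree_sub_lt_left (by rw [hdeg, degree_X_pow]) hp.ne_zero
        (by rw [hp.leadingCoeff_eq, leadingCoeff_X_pow])
    exact ⟨degreeLTEquiv R n ⟨p - X ^ n, hlt⟩, by simp⟩

open scoped Classical in
theorem card_filter_dvd_monicsOfDegree {D : R[X]} {k : ℕ} (hD : IsMonicOfDegree D k) (n : ℕ) :
    #((monicsOfDegree R n).filter (D ∣ ·)) = if k ≤ n then Fintype.card R ^ (n - k) else 0 := by
  split_ifs with hkn
  · have hfilter :
        (monicsOfDegree R n).filter (D ∣ ·) = (monicsOfDegree R (n - k)).image (D * ·) := by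
      ext g
      simp only [mem_filter, mem_image, mem_monicsOfDegree]
      constructor
      · rintro ⟨hg, h, rfl⟩
        exact ⟨h, hD.of_mul_left (by rwa [Nat.add_sub_cancel' hkn]), rfl⟩
      · rintro ⟨h, hh, rfl⟩
        exact ⟨Nat.add_sub_cancel' hkn ▸ hD.mul hh, dvd_mul_right D h⟩
    rw [hfilter, card_image_of_injective _ hD.monic.isRegular.left, card_monicsOfDegree]
  · rw [card_eq_zero, filter_eq_empty_iff]
    rintro _ hg ⟨h, rfl⟩
    have hg := mem_monicsOfDegree.mp hg
    have := hg.natDegree_eq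
    have := (hD.mul ⟨rfl, hD.monic.of_mul_monic_left hg.monic⟩).natDegree_eq
    lia

end MonicsOfDegree

section FiniteField

variable {F : Type*} [Field F]

theorem C_mul_injOn_monic :
    Set.InjOn (fun x : Fˣ × F[X] => C (x.1 : F) * x.2) {x | x.2.Monic} := by
  rintro ⟨c, g⟩ hg ⟨c', g'⟩ hg' h
  simp only [Set.mem_ofPred_eq] at hg hg' h
  have hc : c = c' := Units.ext <| by
    simpa [hg.leadingCoeff, hg'.leadingCoeff] using congr_arg leadingCoeff h
  subst hc
  simp [mul_right_injective₀ (C_ne_zero.2 c.ne_zero) h]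

variable [Fintype F] [DecidableEq F]

theorem ncard_setOf_ne_zero_natDegree_le {P : F[X] → Prop} [DecidablePred P]
    (hP : ∀ c : F, c ≠ 0 → ∀ g, P (C c * g) ↔ P g) (m : ℕ) :
    {f : F[X] | f ≠ 0 ∧ f.natDegree ≤ m ∧ P f}.ncard =
      (Fintype.card F - 1) * ∑ d ∈ range (m + 1), #((monicsOfDegree F d).filter P) := by
  set N := (range (m + 1)).biUnion fun d => (monicsOfDegree F d).filter P
  have hset : {f : F[X] | f ≠ 0 ∧ f.natDegree ≤ m ∧ P f} =
      ((univ : Finset Fˣ) ×ˢ N).image fun x => C (x.1 : F) * x.2 := by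
    ext f
    simp only [Set.mem_ofPred_eq, coe_image, coe_product, coe_univ, Set.mem_image, Set.mem_prod,
      Set.mem_univ, true_and, mem_coe, N, mem_biUnion, mem_range, mem_filter, mem_monicsOfDegree,
      Prod.exists, Nat.lt_succ_iff]
    constructor
    · rintro ⟨hf, hm, hPf⟩
      have hlc := leadingCoeff_ne_zero.2 hf
      refine ⟨Units.mk0 _ hlc, C f.leadingCoeff⁻¹ * f, ⟨f.natDegree, hm, ⟨?_, ?_⟩, ?_⟩, ?_⟩
      · exact natDegree_C_mul (inv_ne_zero hlc)
      · exact monic_C_mul_of_mul_leadingCoeff_eq_one (inv_mul_cancel₀ hlc)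
      · exact (hP _ (inv_ne_zero hlc) f).2 hPf
      · rw [Units.val_mk0, ← mul_assoc, ← C_mul, mul_inv_cancel₀ hlc, C_1, one_mul]
    · rintro ⟨c, g, ⟨d, hd, hg, hPg⟩, rfl⟩
      refine ⟨mul_ne_zero (C_ne_zero.2 c.ne_zero) hg.ne_zero, ?_, (hP _ c.ne_zero g).2 hPg⟩
      rwa [natDegree_C_mul c.ne_zero, hg.natDegree_eq]
  have hdisj :
      (range (m + 1) : Set ℕ).PairwiseDisjoint fun d => (monicsOfDegree F d).filter P := by
    intro d _ d' _ hdd'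
    refine disjoint_left.2 fun g hg hg' => hdd' ?_
    rw [← (mem_monicsOfDegree.1 (mem_filter.1 hg).1).natDegree_eq,
      (mem_monicsOfDegree.1 (mem_filter.1 hg').1).natDegree_eq]
  rw [hset, Set.ncard_coe_finset, card_image_of_injOn, card_product, card_univ,
    Fintype.card_units, card_biUnion hdisj]
  refine C_mul_injOn_monic.mono fun x hx => ?_
  obtain ⟨d, -, hx⟩ := mem_biUnion.1 (mem_product.1 hx).2
  exact (mem_monicsOfDegree.1 (mem_filter.1 hx).1).monic

theorem card_filter_forall_eval_ne_zero_monicsOfDegree (A : Finset F) (n : ℕ) :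
    (#((monicsOfDegree F n).filter fun g => ∀ a ∈ A, g.eval a ≠ 0) : ℤ) =
      ∑ k ∈ range (n + 1), (-1) ^ k * ((#A).choose k : ℤ) * (Fintype.card F : ℤ) ^ (n - k) := by
  have hterm (T : Finset F) :
      #((monicsOfDegree F n).filter fun g => ∀ t ∈ T, g.eval t = 0) =
        if #T ≤ n then Fintype.card F ^ (n - #T) else 0 := by
    classical
    rw [← card_filter_dvd_monicsOfDegree (D := ∏ t ∈ T, (X - C t))
      ⟨natDegree_finsetProd_X_sub_C_eq_card T id, monic_prod_X_sub_C id T⟩ n]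
    exact congr_arg card (filter_congr fun g _ => prod_X_sub_C_dvd_iff.symm)
  calc (#((monicsOfDegree F n).filter fun g => ∀ a ∈ A, g.eval a ≠ 0) : ℤ)
      = ∑ T ∈ A.powerset, (-1 : ℤ) ^ #T *
          #((monicsOfDegree F n).filter fun g => ∀ t ∈ T, g.eval t = 0) := by
        -- `convert` only identifies the decidability instances of the filters
        convert inclusion_exclusion_card_filter (monicsOfDegree F n) A
          (fun a (g : F[X]) => g.eval a = 0)
    _ = _ := by
      simp_rw [hterm]
      rw [sum_powerset_apply_card
          (fun k => (-1 : ℤ) ^ k * ((if k ≤ n then Fintype.card F ^ (n - k) else 0 : ℕ) : ℤ)),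
        sum_range_choose_smul_of_eq_zero _ n fun k hk => by
          rw [if_neg hk.not_ge, Nat.cast_zero, mul_zero]]
      refine sum_congr rfl fun k hk => ?_
      rw [if_pos (mem_range_succ_iff.1 hk), nsmul_eq_mul]
      push_cast
      ring

theorem card_filter_roots_toFinset_eq_monicsOfDegree {s : Finset F} {n : ℕ} (hs : #s ≤ n) :
    #((monicsOfDegree F n).filter fun g => g.roots.toFinset = s) =
      #((monicsOfDegree F (n - #s)).filter fun h => ∀ a ∈ sᶜ, h.eval a ≠ 0) := by
  set D := ∏ t ∈ s, (X - C t)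
  have hD : IsMonicOfDegree D #s :=
    ⟨natDegree_finsetProd_X_sub_C_eq_card s id, monic_prod_X_sub_C id s⟩
  have heval_D (a : F) : D.eval a = 0 ↔ a ∈ s := by
    simp [D, eval_prod, prod_eq_zero_iff, sub_eq_zero]
  suffices (monicsOfDegree F n).filter (fun g => g.roots.toFinset = s) =
      ((monicsOfDegree F (n - #s)).filter fun h => ∀ a ∈ sᶜ, h.eval a ≠ 0).image (D * ·) by
    rw [this, card_image_of_injective _ hD.monic.isRegular.left]
  ext g
  simp only [mem_filter, mem_image, mem_monicsOfDegree, mem_compl]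
  constructor
  · rintro ⟨hg, hroots⟩
    have hroot (a : F) : g.eval a = 0 ↔ a ∈ s := by
      simp [← hroots, mem_roots hg.ne_zero]
    obtain ⟨h, rfl⟩ := prod_X_sub_C_dvd_iff.mpr fun a ha => (hroot a).mpr ha
    refine ⟨h, ⟨hD.of_mul_left (by rwa [Nat.add_sub_cancel' hs]), fun a ha hha => ?_⟩, rfl⟩
    exact ha ((hroot a).mp (by rw [eval_mul, hha, mul_zero]))
  · rintro ⟨h, ⟨hh, hne⟩, rfl⟩
    refine ⟨Nat.add_sub_cancel' hs ▸ hD.mul hh, ?_⟩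
    ext a
    simp only [Multiset.mem_toFinset, mem_roots (hD.mul hh).ne_zero, IsRoot.def, eval_mul,
      mul_eq_zero, heval_D]
    exact ⟨fun h' => h'.elim id fun ha => not_not.mp fun has => hne a has ha, Or.inl⟩

theorem card_filter_card_roots_toFinset_eq_monicsOfDegree {i n : ℕ} (hin : i ≤ n) :
    (#((monicsOfDegree F n).filter fun g => #g.roots.toFinset = i) : ℤ) =
      (Fintype.card F).choose i * ∑ k ∈ range (n - i + 1),
        (-1) ^ k * ((Fintype.card F - i).choose k : ℤ) * (Fintype.card F : ℤ) ^ (n - i - k) := by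
  have hfiber (s : Finset F) (hs : s ∈ powersetCard i univ) :
      (#(((monicsOfDegree F n).filter fun g => #g.roots.toFinset = i).filter
        fun g => g.roots.toFinset = s) : ℤ) = ∑ k ∈ range (n - i + 1),
          (-1) ^ k * ((Fintype.card F - i).choose k : ℤ) * (Fintype.card F : ℤ) ^ (n - i - k) := by
    obtain ⟨-, rfl⟩ := mem_powersetCard.1 hs
    rw [filter_filter, filter_congr fun g _ => and_iff_right_of_imp fun h => congr_arg card h,
      card_filter_roots_toFinset_eq_monicsOfDegree hin,
      card_filter_forall_eval_ne_zero_monicsOfDegree, card_compl]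
  rw [card_eq_sum_card_fiberwise (f := fun g : F[X] => g.roots.toFinset)
      (t := powersetCard i univ) fun g hg =>
        mem_powersetCard.2 ⟨subset_univ _, (mem_filter.1 hg).2⟩,
    Nat.cast_sum, sum_congr rfl hfiber, sum_const, card_powersetCard, card_univ, nsmul_eq_mul]

theorem filter_card_roots_toFinset_eq_monicsOfDegree_of_lt {i n : ℕ} (hni : n < i) :
    (monicsOfDegree F n).filter (fun g => #g.roots.toFinset = i) = ∅ := by
  refine filter_eq_empty_iff.2 fun g hg hgi => ?_
  have := (Multiset.toFinset_card_le g.roots).trans (card_roots' g)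
  rw [(mem_monicsOfDegree.1 hg).natDegree_eq] at this
  omega

end FiniteField

end Polynomial

theorem count_polynomials_with_roots_general (q m i : ℕ) (F : Type) [Field F] [Fintype F]
    (hq : Fintype.card F = q) :
    ({f : Polynomial F | f ≠ 0 ∧ f.natDegree ≤ m ∧
        {u : F | Polynomial.eval u f = 0}.ncard = i}.ncard : ℤ) =
      ((q : ℤ) - 1) * (q.choose i : ℤ) *
        ∑ d ∈ Finset.Icc i m, ∑ k ∈ Finset.range (d - i + 1),
          (-1 : ℤ) ^ k * ((q - i).choose k : ℤ) * (q : ℤ) ^ (d - i - k) := by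
  classical
  subst hq
  have hset : {f : F[X] | f ≠ 0 ∧ f.natDegree ≤ m ∧ {u | eval u f = 0}.ncard = i} =
      {f | f ≠ 0 ∧ f.natDegree ≤ m ∧ #f.roots.toFinset = i} :=
    Set.ext fun f => and_congr_right fun hf => by rw [ncard_setOf_eval_eq_zero hf]
  have hvanish (d : ℕ) (hdm : d ∈ range (m + 1)) (hd : d ∉ Icc i m) :
      #((monicsOfDegree F d).filter fun g => #g.roots.toFinset = i) = 0 := by
    rw [mem_range] at hdm
    rw [mem_Icc] at hd
    rw [filter_card_roots_toFinset_eq_monicsOfDegree_of_lt (by omega), card_empty]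
  rw [hset, ncard_setOf_ne_zero_natDegree_le (fun c hc g => by rw [roots_C_mul g hc]),
    ← sum_subset (fun d hd => mem_range_succ_iff.2 (mem_Icc.1 hd).2) hvanish,
    Nat.cast_mul, Nat.cast_sub Fintype.card_pos, Nat.cast_one, Nat.cast_sum, mul_assoc]
  congr 1
  rw [mul_sum]
  exact sum_congr rfl fun d hd => card_filter_card_roots_toFinset_eq_monicsOfDegree (mem_Icc.1 hd).1

/-- For a prime power `q` and integers `0 ≤ i ≤ m ≤ q − 1`, the number
of nonzero polynomials over `F_q` of degree at most `m` having exactly `i` distinct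
roots in `F_q` equals `(q−1)·C(q,i)·∑_{d=i}^{m} ∑_{k=0}^{d−i} (−1)^k·C(q−i,k)·q^{d−i−k}`. -/
theorem count_polynomials_with_roots (q m i : ℕ) (F : Type) [Field F] [Fintype F]
    (hq : Fintype.card F = q) (him : i ≤ m) (hm : m ≤ q - 1) :
    ({f : Polynomial F | f ≠ 0 ∧ f.natDegree ≤ m ∧
        {u : F | Polynomial.eval u f = 0}.ncard = i}.ncard : ℤ) =
      ((q : ℤ) - 1) * (q.choose i : ℤ) *
        ∑ d ∈ Finset.Icc i m, ∑ k ∈ Finset.range (d - i + 1),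
          (-1 : ℤ) ^ k * ((q - i).choose k : ℤ) * (q : ℤ) ^ (d - i - k) :=
  count_polynomials_with_roots_general q m i F hq
end

section
/- Let q be a prime power and m ≥ q an integer. Then the Wenger graph W_m(q) has exactly q^{m−q+1} connected components, and each connected component is isomorphic (as a graph) to W_{q−1}(q). -/
/-!
Every line through a point `p` is its canonical line `L(p)` (the one with first coordinate `0`)
plus a multiple of `(p₀ ^ i)ᵢ`. As `x ^ q = x` on `F`, the differences `l_{j+q} - l_{j+1}` are
hence the same for all lines through a given point, so they are an invariant of the component.
A vertex is determined by this invariant and its first `q` coordinates, and adjacency only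
involves those coordinates: `W_m(q)` is `q ^ (m - q + 1)` disjoint copies of `W_{q-1}(q)`.
The latter is connected: two lines differing by `t (x ^ i)ᵢ` have a common neighbour, and the
vectors `(x ^ i)_{i < q}`, `x ∈ F`, span `F^q` by Vandermonde.
-/

open Finset

namespace SimpleGraph

variable {V U W : Type*} {G : SimpleGraph V} {H : SimpleGraph U}

lemma reachable_iff_snd_eq_of_iso_boxProd_bot (hH : H.Preconnected)
    (e : G ≃g H □ (⊥ : SimpleGraph W)) {u v : V} :
    G.Reachable u v ↔ (e u).2 = (e v).2 := by
  rw [← e.reachable_iff, reachable_boxProd, reachable_bot, and_iff_right (hH _ _)]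

lemma card_connectedComponent_of_iso_boxProd_bot (hH : H.Connected)
    (e : G ≃g H □ (⊥ : SimpleGraph W)) :
    Nat.card G.ConnectedComponent = Nat.card W := by
  refine Nat.card_eq_of_bijective
    (ConnectedComponent.lift (fun v => (e v).2) fun u v p _ =>
      (reachable_iff_snd_eq_of_iso_boxProd_bot hH.preconnected e).1 p.reachable) ⟨?_, ?_⟩
  · refine ConnectedComponent.ind₂ fun u v h => ConnectedComponent.sound ?_
    exact (reachable_iff_snd_eq_of_iso_boxProd_bot hH.preconnected e).2 h
  · intro w
    obtain ⟨a⟩ := hH.nonempty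
    exact ⟨G.connectedComponentMk (e.symm (a, w)), by simp⟩

lemma nonempty_induce_supp_iso_of_iso_boxProd_bot (hH : H.Preconnected)
    (e : G ≃g H □ (⊥ : SimpleGraph W)) (c : G.ConnectedComponent) :
    Nonempty (G.induce c.supp ≃g H) := by
  obtain ⟨v₀, rfl⟩ := c.exists_rep
  have hsupp (v : V) : v ∈ (G.connectedComponentMk v₀).supp ↔ (e v).2 = (e v₀).2 := by
    rw [ConnectedComponent.mem_supp_iff, ConnectedComponent.eq,
      reachable_iff_snd_eq_of_iso_boxProd_bot hH e, eq_comm]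
  refine ⟨⟨{ toFun := fun v => (e v).1
             invFun := fun a => ⟨e.symm (a, (e v₀).2), (hsupp _).2 (by simp)⟩
             left_inv := fun v => ?_
             right_inv := fun a => by simp }, ?_⟩⟩
  · ext1
    simp [← (hsupp v).1 v.2]
  · intro u v
    simp [← e.map_adj_iff, boxProd_adj, (hsupp u).1 u.2, (hsupp v).1 v.2]

end SimpleGraph

namespace WengerGraph

variable {F : Type*} [Field F] {k m : ℕ}

@[simp]
lemma adj_inl_inr {p l : Fin (m + 1) → F} :
    (WengerGraph F m).Adj (.inl p) (.inr l) ↔ wengerAdj p l := Iff.rfl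

def canonicalLine (p : Fin (m + 1) → F) : Fin (m + 1) → F :=
  Fin.induction 0 fun i a => a * p 0 - p i.succ

@[simp]
lemma canonicalLine_zero (p : Fin (m + 1) → F) : canonicalLine p 0 = 0 := rfl

lemma canonicalLine_succ (p : Fin (m + 1) → F) (i : Fin m) :
    canonicalLine p i.succ = canonicalLine p i.castSucc * p 0 - p i.succ :=
  Fin.induction_succ _ _ i

lemma wengerAdj_iff {p l : Fin (m + 1) → F} :
    wengerAdj p l ↔ ∀ i, l i = canonicalLine p i + l 0 * p 0 ^ (i : ℕ) := by
  refine ⟨fun h i => ?_, fun h i => ?_⟩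
  · induction i using Fin.induction with
    | zero => simp
    | succ i ih =>
      rw [eq_sub_of_add_eq (h i), ih, canonicalLine_succ, Fin.val_succ, Fin.val_castSucc, pow_succ]
      ring
  · rw [h i.succ, h i.castSucc, canonicalLine_succ, Fin.val_succ, Fin.val_castSucc, pow_succ]
    ring

lemma wengerAdj_canonicalLine (p : Fin (m + 1) → F) : wengerAdj p (canonicalLine p) :=
  wengerAdj_iff.2 fun i => by simp

lemma eq_of_canonicalLine_eq {p p' : Fin (m + 1) → F} (h₀ : p 0 = p' 0)
    (h : canonicalLine p = canonicalLine p') : p = p' := by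
  funext i
  induction i using Fin.cases with
  | zero => exact h₀
  | succ i =>
    have := canonicalLine_succ p i
    rw [h, canonicalLine_succ, h₀] at this
    linear_combination this

lemma canonicalLine_comp_castLE (h : k + 1 ≤ m + 1) (p : Fin (m + 1) → F) :
    canonicalLine (p ∘ Fin.castLE h) = canonicalLine p ∘ Fin.castLE h := by
  funext i
  induction i using Fin.induction with
  | zero => rfl
  | succ i ih =>
    simp only [Function.comp_apply, canonicalLine_succ, Fin.castLE_succ] at ih ⊢
    rw [ih]
    rfl

def lineInvariant (k : ℕ) (l : Fin (m + 1) → F) (j : Fin (m - k)) : F :=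
  l ⟨j + k + 1, by omega⟩ - l ⟨j + 1, by omega⟩

lemma lineInvariant_add_mul_pow {x : F} (hx : x ^ (k + 1) = x) (l : Fin (m + 1) → F) (c : F) :
    lineInvariant k (fun i => l i + c * x ^ (i : ℕ)) = lineInvariant k l := by
  funext j
  have hpow : x ^ (j + k + 1 : ℕ) = x ^ (j + 1 : ℕ) := by rw [add_assoc, pow_add, hx, pow_succ]
  simp only [lineInvariant, hpow]
  ring

lemma eq_of_comp_castLE_eq_of_lineInvariant_eq (hk : 0 < k) (h : k + 1 ≤ m + 1)
    {l l' : Fin (m + 1) → F} (htr : l ∘ Fin.castLE h = l' ∘ Fin.castLE h)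
    (hinv : lineInvariant k l = lineInvariant k l') : l = l' := by
  funext ⟨n, hn⟩
  induction n using Nat.strong_induction_on with
  | _ n ih =>
    by_cases hnk : n ≤ k
    · exact congrFun htr ⟨n, by omega⟩
    · have hj := congrFun hinv ⟨n - k - 1, by omega⟩
      have hn' : n - k - 1 + k + 1 = n := by omega
      simp only [lineInvariant, hn', ih (n - k - 1 + 1) (by omega)] at hj
      linear_combination hj

lemma wengerAdj_iff_of_pow_eq_self (hk : 0 < k) (hpow : ∀ x : F, x ^ (k + 1) = x)
    (h : k + 1 ≤ m + 1) {p l : Fin (m + 1) → F} :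
    wengerAdj p l ↔ wengerAdj (p ∘ Fin.castLE h) (l ∘ Fin.castLE h) ∧
      lineInvariant k (canonicalLine p) = lineInvariant k l := by
  have htr : wengerAdj (p ∘ Fin.castLE h) (l ∘ Fin.castLE h) ↔
      l ∘ Fin.castLE h =
        (fun i => canonicalLine p i + l 0 * p 0 ^ (i : ℕ)) ∘ Fin.castLE h := by
    simp [wengerAdj_iff, canonicalLine_comp_castLE, funext_iff]
  rw [htr, wengerAdj_iff, ← funext_iff]
  constructor
  · intro hl
    refine ⟨by rw [← hl], ?_⟩
    rw [hl, lineInvariant_add_mul_pow (hpow _)]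
  · rintro ⟨htr, hinv⟩
    refine eq_of_comp_castLE_eq_of_lineInvariant_eq hk h htr ?_
    rw [lineInvariant_add_mul_pow (hpow _), hinv]

def splitVertex (h : k + 1 ≤ m + 1) :
    (Fin (m + 1) → F) ⊕ (Fin (m + 1) → F) →
      ((Fin (k + 1) → F) ⊕ (Fin (k + 1) → F)) × (Fin (m - k) → F)
  | .inl p => (.inl (p ∘ Fin.castLE h), lineInvariant k (canonicalLine p))
  | .inr l => (.inr (l ∘ Fin.castLE h), lineInvariant k l)

lemma splitVertex_injective (hk : 0 < k) (h : k + 1 ≤ m + 1) :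
    Function.Injective (splitVertex (F := F) h) := by
  rintro (p | l) (p' | l') he <;>
    simp only [splitVertex, Prod.mk.injEq, Sum.inl.injEq, Sum.inr.injEq, reduceCtorEq,
      false_and] at he
  · obtain ⟨htr, hinv⟩ := he
    refine congrArg _ (eq_of_canonicalLine_eq (congrFun htr 0) ?_)
    refine eq_of_comp_castLE_eq_of_lineInvariant_eq hk h ?_ hinv
    rw [← canonicalLine_comp_castLE, htr, canonicalLine_comp_castLE]
  · exact congrArg _ (eq_of_comp_castLE_eq_of_lineInvariant_eq hk h he.1 he.2)

lemma splitVertex_bijective [Finite F] (hk : 0 < k) (h : k + 1 ≤ m + 1) :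
    Function.Bijective (splitVertex (F := F) h) := by
  refine (Nat.bijective_iff_injective_and_card _).2 ⟨splitVertex_injective hk h, ?_⟩
  simp only [Nat.card_sum, Nat.card_prod, Nat.card_fun, Nat.card_eq_fintype_card,
    Fintype.card_fin]
  rw [show m + 1 = k + 1 + (m - k) by omega, pow_add]
  ring

noncomputable def isoBoxProdBot [Finite F] (hk : 0 < k) (hpow : ∀ x : F, x ^ (k + 1) = x)
    (h : k + 1 ≤ m + 1) :
    WengerGraph F m ≃g WengerGraph F k □ (⊥ : SimpleGraph (Fin (m - k) → F)) where
  toEquiv := Equiv.ofBijective _ (splitVertex_bijective hk h)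
  map_rel_iff' {u v} := by
    rcases u with p | l <;> rcases v with p' | l' <;>
      simp [splitVertex, SimpleGraph.boxProd_adj, WengerGraph,
        wengerAdj_iff_of_pow_eq_self hk hpow h, eq_comm]

lemma reachable_line_add_mul_pow (l : Fin (m + 1) → F) (x t : F) :
    (WengerGraph F m).Reachable (.inr l) (.inr fun i => l i + t * x ^ (i : ℕ)) := by
  let p : Fin (m + 1) → F := Fin.cons x fun i => l i.castSucc * x - l i.succ
  have hl : wengerAdj p l := fun i => by simp [p]
  have hl' : wengerAdj p (fun i => l i + t * x ^ (i : ℕ)) := fun i => by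
    simp only [p, Fin.cons_succ, Fin.cons_zero, Fin.val_succ, Fin.val_castSucc, pow_succ]
    ring
  exact (adj_inl_inr.2 hl).reachable.symm.trans (adj_inl_inr.2 hl').reachable

lemma reachable_line_add_sum_mul_pow (l : Fin (m + 1) → F) (t : F → F) (s : Finset F) :
    (WengerGraph F m).Reachable (.inr l)
      (.inr fun i => l i + ∑ x ∈ s, t x * x ^ (i : ℕ)) := by
  classical
  induction s using Finset.induction_on with
  | empty => simp
  | insert a s ha ih =>
    convert ih.trans (reachable_line_add_mul_pow _ a (t a)) using 3 with i
    rw [Finset.sum_insert ha]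
    ring

lemma exists_sum_mul_pow_eq [Fintype F] (hF : Fintype.card F = k + 1)
    (v : Fin (k + 1) → F) :
    ∃ t : F → F, ∀ i : Fin (k + 1), ∑ x, t x * x ^ (i : ℕ) = v i := by
  let e : Fin (k + 1) ≃ F := (Fintype.equivFinOfCardEq hF).symm
  have hV : IsUnit (Matrix.vandermonde e) := (Matrix.isUnit_iff_isUnit_det _).2 <|
    isUnit_iff_ne_zero.2 (Matrix.det_vandermonde_ne_zero_iff.2 e.injective)
  obtain ⟨t, ht⟩ := Matrix.vecMul_surjective_iff_isUnit.2 hV v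
  refine ⟨t ∘ e.symm, fun i => ?_⟩
  rw [← ht, ← e.sum_comp]
  simp [Matrix.vecMul, dotProduct, Matrix.vandermonde_apply]

lemma connected [Fintype F] (hF : Fintype.card F = k + 1) : (WengerGraph F k).Connected := by
  have hline (l : Fin (k + 1) → F) : (WengerGraph F k).Reachable (.inr 0) (.inr l) := by
    obtain ⟨t, ht⟩ := exists_sum_mul_pow_eq hF l
    convert reachable_line_add_sum_mul_pow 0 t Finset.univ using 3 with i
    simp [ht]
  refine (SimpleGraph.connected_iff_exists_forall_reachable _).2 ⟨.inr 0, ?_⟩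
  rintro (p | l)
  · exact (hline _).trans (adj_inl_inr.2 (wengerAdj_canonicalLine p)).reachable.symm
  · exact hline l

end WengerGraph

/-- For a prime power `q` and `m ≥ q`, the Wenger graph `W_m(q)` has
exactly `q^{m−q+1}` connected components, each of which (as an induced subgraph) is
isomorphic to `W_{q−1}(q)`. -/
theorem wenger_components (q m : ℕ) (F : Type) [Field F] [Fintype F]
    (hq : Fintype.card F = q) (hm : q ≤ m) :
    Nat.card (WengerGraph F m).ConnectedComponent = q ^ (m - q + 1) ∧
    ∀ c : (WengerGraph F m).ConnectedComponent,
      Nonempty ((WengerGraph F m).induce c.supp ≃g WengerGraph F (q - 1)) := by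
  have hq₁ : 1 < q := hq ▸ Fintype.one_lt_card
  have hcard : Fintype.card F = q - 1 + 1 := by omega
  have hconn := WengerGraph.connected hcard
  have e := WengerGraph.isoBoxProdBot (k := q - 1) (m := m) (by omega)
    (fun x => by rw [← hcard]; exact FiniteField.pow_card x) (by omega)
  refine ⟨?_, SimpleGraph.nonempty_induce_supp_iso_of_iso_boxProd_bot hconn.preconnected e⟩
  rw [SimpleGraph.card_connectedComponent_of_iso_boxProd_bot hconn e, Nat.card_fun,
    Nat.card_eq_fintype_card, hq, Nat.card_eq_fintype_card, Fintype.card_fin]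
  congr 1
  omega
end

section
/- Let q be a prime power and m ≥ q an integer. Then a real number λ is an eigenvalue of the adjacency matrix of the Wenger graph W_m(q) if and only if λ ∈ {q, −q} ∪ {√(i·q) : 0 ≤ i ≤ q−1} ∪ {−√(i·q) : 0 ≤ i ≤ q−1}; that is, the distinct eigenvalues of W_m(q) are exactly ±q, ±√((q−1)q), ±√((q−2)q), …, ±√(2q), ±√q, and 0. -/
open Finset

/-!
Let `N` be the point–line incidence matrix, so that the adjacency matrix is `[[0, N], [Nᵀ, 0]]`
and `λ` is one of its eigenvalues iff `λ²` is one of `NᵀN` (over any field, `λ = 0` included, as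
`N` is square). The lines through a point `p` form a coset of `F • (1, p₀, p₀², …)`, and a point
on a line is determined by its first coordinate. Hence every additive character `χ` of `F^{m+1}` is an
eigenvector of `NᵀN`, with eigenvalue `q` times the number of `s ∈ F` for which `χ` is trivial on
`F • (1, s, s², …)`; the characters form a basis, so these are all the eigenvalues. For
`χ(x) = ψ(∑ Pᵢ xᵢ)` with `ψ` nontrivial and `deg P ≤ m`, that number is the number of roots of `P`
in `F`, which can be any `k ≤ min(q, m)`.
-/

open Matrix Module.End

namespace Matrix

variable {n K : Type*} [Fintype n] [Field K]

theorem hasEigenvalue_mulVecLin_iff_s12 {M : Matrix n n K} {μ : K} :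
    HasEigenvalue M.mulVecLin μ ↔ ∃ v ≠ 0, M *ᵥ v = μ • v := by
  simp only [hasEigenvalue_iff, Submodule.ne_bot_iff, mem_eigenspace_iff, mulVecLin_apply]
  exact exists_congr fun v => and_comm

theorem fromBlocks_zero_mulVec_eq_smul_iff {B C : Matrix n n K} {μ : K} {v : n ⊕ n → K} :
    fromBlocks 0 B C 0 *ᵥ v = μ • v ↔
      B *ᵥ (v ∘ Sum.inr) = μ • (v ∘ Sum.inl) ∧ C *ᵥ (v ∘ Sum.inl) = μ • (v ∘ Sum.inr) := by
  simp [fromBlocks_mulVec, funext_iff, Sum.forall]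

variable [DecidableEq n]

theorem hasEigenvalue_mulVecLin_zero_iff {M : Matrix n n K} :
    HasEigenvalue M.mulVecLin 0 ↔ M.det = 0 := by
  simp [hasEigenvalue_mulVecLin_iff_s12, ← exists_mulVec_eq_zero_iff]

theorem hasEigenvalue_mulVecLin_map_iff {L : Type*} [Field L] [Algebra K L] {M : Matrix n n K}
    {μ : K} :
    HasEigenvalue (M.map (algebraMap K L)).mulVecLin (algebraMap K L μ) ↔
      HasEigenvalue M.mulVecLin μ := by
  simp only [hasEigenvalue_iff_isRoot_charpoly, charpoly_mulVecLin, charpoly_map]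
  exact Polynomial.isRoot_map_iff (FaithfulSMul.algebraMap_injective K L)

theorem hasEigenvalue_fromBlocks_zero_transpose_iff (B : Matrix n n K) (μ : K) :
    HasEigenvalue (fromBlocks 0 B Bᵀ 0).mulVecLin μ ↔ HasEigenvalue (Bᵀ * B).mulVecLin (μ ^ 2) := by
  rcases eq_or_ne μ 0 with rfl | hμ
  · rw [zero_pow two_ne_zero, hasEigenvalue_mulVecLin_zero_iff (M := Bᵀ * B), det_mul,
      det_transpose, mul_self_eq_zero, hasEigenvalue_mulVecLin_iff_s12]
    simp only [fromBlocks_zero_mulVec_eq_smul_iff]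
    simp only [zero_smul]
    constructor
    · rintro ⟨v, hv, hB, hBt⟩
      by_cases hy : v ∘ Sum.inr = 0
      · rw [← det_transpose, ← exists_mulVec_eq_zero_iff]
        refine ⟨v ∘ Sum.inl, fun hx => hv ?_, hBt⟩
        rw [← Sum.elim_comp_inl_inr v, hx, hy, Sum.elim_zero_zero]
      · exact exists_mulVec_eq_zero_iff.mp ⟨_, hy, hB⟩
    · intro hB
      obtain ⟨y, hy, hBy⟩ := exists_mulVec_eq_zero_iff.mpr hB
      exact ⟨Sum.elim 0 y, fun h => hy (by simpa using congrArg (· ∘ Sum.inr) h),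
        by simpa using hBy⟩
  · simp only [hasEigenvalue_mulVecLin_iff_s12, fromBlocks_zero_mulVec_eq_smul_iff]
    constructor
    · rintro ⟨v, hv, hB, hBt⟩
      refine ⟨v ∘ Sum.inr, fun hy => hv ?_, ?_⟩
      · have hx : v ∘ Sum.inl = 0 := by
          simpa [hy, hμ] using hB.symm
        rw [← Sum.elim_comp_inl_inr v, hx, hy, Sum.elim_zero_zero]
      · rw [← mulVec_mulVec, hB, mulVec_smul, hBt, smul_smul, sq]
    · rintro ⟨y, hy, hBy⟩
      refine ⟨Sum.elim (μ⁻¹ • B *ᵥ y) y, fun h => hy (by simpa using congrArg (· ∘ Sum.inr) h),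
        ?_, ?_⟩
      · simp [smul_smul, hμ]
      · simp [mulVec_smul, mulVec_mulVec, hBy, smul_smul, sq, hμ]

end Matrix

namespace WengerGraph

variable {F : Type*} [Field F] {m : ℕ}

def powerVec (m : ℕ) (s : F) : Fin (m + 1) → F := fun i => s ^ (i : ℕ)

theorem wengerAdj_iff_exists_add_smul {p l l' : Fin (m + 1) → F} (hl : wengerAdj p l) :
    wengerAdj p l' ↔ ∃ t : F, l + t • powerVec m (p 0) = l' := by
  constructor
  · intro hl'
    refine ⟨l' 0 - l 0, funext fun i => ?_⟩
    induction i using Fin.induction with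
    | zero => simp [powerVec]
    | succ i ih =>
      simp only [Pi.add_apply, Pi.smul_apply, powerVec, smul_eq_mul, Fin.val_succ,
        Fin.val_castSucc, pow_succ] at ih ⊢
      linear_combination hl i - hl' i + p 0 * ih
  · rintro ⟨t, rfl⟩ i
    simp only [Pi.add_apply, Pi.smul_apply, powerVec, smul_eq_mul, Fin.val_succ,
      Fin.val_castSucc, pow_succ]
    linear_combination hl i

def pointOn (l : Fin (m + 1) → F) (s : F) : Fin (m + 1) → F :=
  Fin.cons s fun i => l i.castSucc * s - l i.succ

@[simp]
theorem pointOn_zero (l : Fin (m + 1) → F) (s : F) : pointOn l s 0 = s := rfl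

theorem wengerAdj_iff_pointOn_eq {p l : Fin (m + 1) → F} :
    wengerAdj p l ↔ pointOn l (p 0) = p := by
  constructor
  · intro h
    refine funext fun i => Fin.cases rfl (fun i => ?_) i
    simp only [pointOn, Fin.cons_succ]
    linear_combination -h i
  · rintro h i
    rw [← h]
    simp [pointOn]

theorem wengerAdj_pointOn (l : Fin (m + 1) → F) (s : F) : wengerAdj (pointOn l s) l :=
  wengerAdj_iff_pointOn_eq.2 rfl

open scoped Classical in
noncomputable def incidence (F : Type*) [Field F] (m : ℕ) (R : Type*) [Zero R] [One R] :
    Matrix (Fin (m + 1) → F) (Fin (m + 1) → F) R :=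
  of fun p l => if wengerAdj p l then 1 else 0

theorem wengerAdjMatrix_map_eq_fromBlocks :
    (wengerAdjMatrix F m).map (algebraMap ℝ ℂ) =
      fromBlocks 0 (incidence F m ℂ) (incidence F m ℂ)ᵀ 0 := by
  ext (p | l) (p' | l') <;>
    simp only [wengerAdjMatrix, map_apply, SimpleGraph.adjMatrix_apply] <;>
    split_ifs <;> simp_all [WengerGraph, incidence]

variable [Fintype F] {R : Type*} [Semiring R]

theorem incidence_mulVec_apply {p l : Fin (m + 1) → F} (hl : wengerAdj p l)
    (f : (Fin (m + 1) → F) → R) :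
    (incidence F m R *ᵥ f) p = ∑ t : F, f (l + t • powerVec m (p 0)) := by
  simp only [mulVec, dotProduct, incidence, of_apply, ite_mul, one_mul, zero_mul]
  symm
  apply Fintype.sum_of_injective fun t : F => l + t • powerVec m (p 0)
  · intro t t' h
    simpa [powerVec] using congrFun h 0
  · intro l' hl'
    rw [if_neg (by rwa [wengerAdj_iff_exists_add_smul hl])]
  · intro t
    rw [if_pos ((wengerAdj_iff_exists_add_smul hl).2 ⟨t, rfl⟩)]

theorem incidence_transpose_mulVec_apply (f : (Fin (m + 1) → F) → R) (l : Fin (m + 1) → F) :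
    ((incidence F m R)ᵀ *ᵥ f) l = ∑ s : F, f (pointOn l s) := by
  simp only [mulVec, dotProduct, transpose_apply, incidence, of_apply, ite_mul, one_mul, zero_mul]
  symm
  apply Fintype.sum_of_injective (pointOn l) fun s s' h => congrFun h 0
  · intro p hp
    rw [if_neg fun h => hp ⟨p 0, wengerAdj_iff_pointOn_eq.1 h⟩]
  · intro s
    rw [if_pos (wengerAdj_pointOn l s)]

noncomputable def directionChar (χ : AddChar (Fin (m + 1) → F) ℂ) (s : F) : AddChar F ℂ :=
  χ.compAddMonoidHom (LinearMap.toSpanSingleton F _ (powerVec m s)).toAddMonoidHom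

noncomputable def trivialDirections (χ : AddChar (Fin (m + 1) → F) ℂ) : Finset F :=
  {s | directionChar χ s = 0}

theorem incidence_mulVec_addChar_apply (χ : AddChar (Fin (m + 1) → F) ℂ)
    {p l : Fin (m + 1) → F} (hl : wengerAdj p l) :
    (incidence F m ℂ *ᵥ χ) p = χ l * ∑ t, directionChar χ (p 0) t := by
  rw [incidence_mulVec_apply hl, mul_sum]
  simp [directionChar, AddChar.map_add_eq_mul]

theorem incidence_transpose_mul_incidence_mulVec_addChar (χ : AddChar (Fin (m + 1) → F) ℂ) :
    ((incidence F m ℂ)ᵀ * incidence F m ℂ) *ᵥ ⇑χ =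
      ((#(trivialDirections χ) * Fintype.card F : ℕ) : ℂ) • ⇑χ := by
  ext l
  rw [← mulVec_mulVec, incidence_transpose_mulVec_apply]
  simp only [incidence_mulVec_addChar_apply χ (wengerAdj_pointOn l _), pointOn_zero,
    AddChar.sum_eq_ite, mul_ite, mul_zero, sum_ite, sum_const, add_zero,
    nsmul_eq_mul, trivialDirections, Nat.cast_mul, Pi.smul_apply, smul_eq_mul]
  ring

theorem hasEigenvalue_incidence_transpose_mul_incidence_iff (μ : ℂ) :
    HasEigenvalue ((incidence F m ℂ)ᵀ * incidence F m ℂ).mulVecLin μ ↔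
      ∃ χ : AddChar (Fin (m + 1) → F) ℂ,
        ((#(trivialDirections χ) * Fintype.card F : ℕ) : ℂ) = μ := by
  let b := AddChar.complexBasis (Fin (m + 1) → F)
  have : ((incidence F m ℂ)ᵀ * incidence F m ℂ).mulVecLin =
      toLin b b (diagonal fun χ => ((#(trivialDirections χ) * Fintype.card F : ℕ) : ℂ)) := by
    refine b.ext fun χ => ?_
    rw [toLin_self]
    simp only [b, AddChar.complexBasis_apply, mulVecLin_apply,
      incidence_transpose_mul_incidence_mulVec_addChar, diagonal_apply, ite_smul, zero_smul,
      Finset.sum_ite_eq', Finset.mem_univ, if_true]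
  rw [this, hasEigenvalue_toLin_diagonal_iff]

open Polynomial in
theorem exists_card_trivialDirections_eq {k : ℕ} (hkF : k ≤ Fintype.card F) (hkm : k ≤ m) :
    ∃ χ : AddChar (Fin (m + 1) → F) ℂ, #(trivialDirections χ) = k := by
  obtain ⟨S, -, hS⟩ := exists_subset_card_eq (s := (univ : Finset F)) (by simpa using hkF)
  set P : F[X] := ∏ a ∈ S, (X - C a)
  have hP : P.natDegree < m + 1 := by
    rw [natDegree_finsetProd_X_sub_C_eq_card]
    omega
  obtain ⟨ψ, hψ1⟩ := (AddChar.exists_apply_ne_zero (a := (1 : F))).2 one_ne_zero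
  have hψ : ∀ a, ψ.mulShift a = 0 ↔ a = 0 := fun a =>
    (AddChar.to_mulShift_inj_of_isPrimitive (.of_ne_one (AddChar.ne_one_iff.2 ⟨1, hψ1⟩))).eq_iff'
      ψ.mulShift_zero
  let χ := ψ.compAddMonoidHom
    (Fintype.linearCombination F fun i : Fin (m + 1) => P.coeff i).toAddMonoidHom
  have hdir : ∀ s, directionChar χ s = ψ.mulShift (P.eval s) := by
    intro s
    ext t
    simp only [χ, directionChar, AddChar.compAddMonoidHom_apply, LinearMap.toAddMonoidHom_coe,
      LinearMap.toSpanSingleton_apply, map_smul, Fintype.linearCombination_apply, powerVec,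
      smul_eq_mul, eval_eq_sum_range' hP, AddChar.mulShift_apply]
    rw [Fin.sum_univ_eq_sum_range (fun i => s ^ i * P.coeff i), mul_comm t]
    simp only [mul_comm]
  refine ⟨χ, ?_⟩
  have : trivialDirections χ = S := by
    ext s
    simp [trivialDirections, hdir, hψ, P, eval_prod, prod_eq_zero_iff, sub_eq_zero]
  rw [this, hS]

theorem hasEigenvalue_wengerAdjMatrix_iff (lam : ℝ) :
    HasEigenvalue (wengerAdjMatrix F m).mulVecLin lam ↔
      ∃ χ : AddChar (Fin (m + 1) → F) ℂ, lam ^ 2 = #(trivialDirections χ) * Fintype.card F := by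
  classical
  rw [← hasEigenvalue_mulVecLin_map_iff (L := ℂ), wengerAdjMatrix_map_eq_fromBlocks,
    hasEigenvalue_fromBlocks_zero_transpose_iff,
    hasEigenvalue_incidence_transpose_mul_incidence_iff]
  refine exists_congr fun χ => ?_
  rw [Complex.coe_algebraMap, eq_comm]
  norm_cast

end WengerGraph

theorem exists_le_sq_eq_mul_iff (q : ℕ) (lam : ℝ) :
    (∃ k ≤ q, lam ^ 2 = k * q) ↔
      lam = q ∨ lam = -q ∨ ∃ i : ℕ, i ≤ q - 1 ∧ (lam = √(i * q) ∨ lam = -√(i * q)) := by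
  have hsq (k : ℕ) : lam ^ 2 = k * q ↔ lam = √(k * q) ∨ lam = -√(k * q) := by
    rw [← sq_eq_sq_iff_eq_or_eq_neg, Real.sq_sqrt (by positivity)]
  constructor
  · rintro ⟨k, hk, h⟩
    rcases hk.lt_or_eq with hk | rfl
    · exact .inr (.inr ⟨k, by omega, (hsq k).1 h⟩)
    · rw [hsq, Real.sqrt_mul_self k.cast_nonneg] at h
      exact h.imp_right .inl
  · rintro (rfl | rfl | ⟨i, hi, h⟩)
    · exact ⟨q, le_rfl, by ring⟩
    · exact ⟨q, le_rfl, by ring⟩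
    · exact ⟨i, by omega, (hsq i).2 h⟩

/-- For a prime power `q` and `m ≥ q`, the distinct eigenvalues of the
adjacency matrix of `W_m(q)` are exactly `±q` and `±√(i·q)` for `0 ≤ i ≤ q − 1`. -/
theorem wenger_eigenvalues_large_m (q m : ℕ) (F : Type) [Field F] [Fintype F]
    (hq : Fintype.card F = q) (hm : q ≤ m) (lam : ℝ) :
    Module.End.HasEigenvalue ((wengerAdjMatrix F m).mulVecLin) lam ↔
      (lam = q ∨ lam = -q ∨
        ∃ i : ℕ, i ≤ q - 1 ∧ (lam = Real.sqrt (i * q) ∨ lam = -Real.sqrt (i * q))) := by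
  rw [← exists_le_sq_eq_mul_iff, WengerGraph.hasEigenvalue_wengerAdjMatrix_iff, ← hq]
  constructor
  · rintro ⟨χ, hχ⟩
    exact ⟨_, card_le_univ _, hχ⟩
  · rintro ⟨k, hk, hlam⟩
    obtain ⟨χ, hχ⟩ := WengerGraph.exists_card_trivialDirections_eq hk (hk.trans (hq ▸ hm))
    exact ⟨χ, hχ ▸ hlam⟩
end
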